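/- arXiv:2001.07578 — 2 statements merged into one kernel-verified Lean document; each statement's English description precedes it below -/
import Mathlib

section
/- Let f : (Fin n → Bool) → Y be a classifier, let w : Fin n → Bool with f w = η, let π ∈ Y with π ≠ η, let i be a Finset of Fin n and v : Fin n → Bool, and let A = {x | ∀ j ∈ i, x j = v j} be the corresponding cylinder set. Then the following are equivalent: (1) the counterfactual 'A □→ (f · = π)' holds at w under the Hamming-distance semantics, i.e. every x ∈ A at minimal Hamming distance from w among elements of A satisfies f x = π; (2) f w' = π where w' is the overwrite of w by v on i (w' j = v j for j ∈ i, w' j = w j otherwise); (3) there exists y : Fin n → Bool differing from w only on coordinates in i, with y j = v j for all j ∈ i, f y = π, and such that every x' agreeing with y on all coordinates in i and satisfying f x' = π has hammingDist w x' ≥ hammingDist w y (i.e. there is a minimally appropriate fixed transformation over the dimensions i fixed by the antecedent whose image satisfies the antecedent). -/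
/-- For a cylinder antecedent `A = {x | ∀ j ∈ i, x j = v j}` in the Boolean
feature space with the Hamming-distance Lewis semantics, the following are equivalent:
(1) the counterfactual `A □→ (f · = π)` holds at `w`;
(2) `f` maps the overwrite of `w` by `v` on `i` to `π`;
(3) there is a minimally appropriate fixed transformation of `w` over the dimensions `i`
    whose image satisfies the antecedent. -/
theorem cylinder_counterfactual_iff_overwrite_iff_min_appropriate
    {n : ℕ} {Y : Type*} (f : (Fin n → Bool) → Y)
    (w : Fin n → Bool) (η π : Y) (hw : f w = η) (hπ : π ≠ η)
    (i : Finset (Fin n)) (v : Fin n → Bool)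
    (A : Set (Fin n → Bool)) (hA : A = {x : Fin n → Bool | ∀ j ∈ i, x j = v j}) :
    ((∀ x ∈ A, (∀ z ∈ A, hammingDist w x ≤ hammingDist w z) → f x = π) ↔
      f (fun j => if j ∈ i then v j else w j) = π) ∧
    ((f (fun j => if j ∈ i then v j else w j) = π) ↔
      (∃ y : Fin n → Bool,
        (∀ j ∉ i, y j = w j) ∧ (∀ j ∈ i, y j = v j) ∧ f y = π ∧
        ∀ x' : Fin n → Bool, (∀ j ∈ i, x' j = y j) → f x' = π →
          hammingDist w x' ≥ hammingDist w y)) := by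
  classical
  set w' : Fin n → Bool := fun j => if j ∈ i then v j else w j with hw'
  have hw'A : ∀ j ∈ i, w' j = v j := by intro j hj; simp [hw', hj]
  have hsub : ∀ z : Fin n → Bool, (∀ j ∈ i, z j = v j) →
      Finset.univ.filter (fun j => w j ≠ w' j) ⊆ Finset.univ.filter (fun j => w j ≠ z j) := by
    intro z hz j hj
    simp only [Finset.mem_filter, Finset.mem_univ, true_and] at hj ⊢
    by_cases hji : j ∈ i
    · rw [hz j hji]; simpa [hw', hji] using hj
    · exfalso; apply hj; simp [hw', hji]
  have hmin : ∀ z : Fin n → Bool, (∀ j ∈ i, z j = v j) →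
      hammingDist w w' ≤ hammingDist w z := by
    intro z hz
    exact Finset.card_le_card (hsub z hz)
  have key : ∀ x : Fin n → Bool, (∀ j ∈ i, x j = v j) →
      hammingDist w x ≤ hammingDist w w' → x = w' := by
    intro x hx hle
    have hsubx := hsub x hx
    have hcard : hammingDist w x = hammingDist w w' :=
      le_antisymm hle (hmin x hx)
    have heq : Finset.univ.filter (fun j => w j ≠ w' j) = Finset.univ.filter (fun j => w j ≠ x j) :=
      Finset.eq_of_subset_of_card_le hsubx (le_of_eq hcard)
    funext j
    by_cases hji : j ∈ i
    · rw [hx j hji, hw'A j hji]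
    · by_contra hne
      have hxw : x j ≠ w j := by
        simpa [hw', hji] using hne
      have : j ∈ Finset.univ.filter (fun j => w j ≠ x j) := by
        simp [Ne.symm hxw]
      rw [← heq] at this
      simp [hw', hji] at this
  constructor
  · constructor
    · intro h
      exact h w' (by rw [hA]; exact hw'A) (by rw [hA]; intro z hz; exact hmin z hz)
    · intro h x hx hxmin
      rw [hA] at hx
      have := key x hx (hxmin w' (by rw [hA]; exact hw'A))
      rw [this]; exact h
  · constructor
    · intro h
      refine ⟨w', fun j hj => by simp [hw', hj], hw'A, h, ?_⟩
      intro x' hx' _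
      exact hmin x' (fun j hj => by rw [hx' j hj]; exact hw'A j hj)
    · rintro ⟨y, hyo, hyi, hyπ, _⟩
      have : y = w' := by
        funext j
        by_cases hji : j ∈ i
        · rw [hyi j hji, hw'A j hji]
        · rw [hyo j hji]; simp [hw', hji]
      rw [← this]; exact hyπ
end

section
/- Let f : (Fin n → Bool) → Y be a classifier and π ∈ Y, and let R = {z : Fin n → Bool | f z ≠ π}. Then R fails to be metrically convex with respect to Hamming distance (i.e. there exist a, b ∈ R and a point c with hammingDist a c + hammingDist c b = hammingDist a b and f c = π) if and only if there exist a world a with f a ≠ π, values v : Fin n → Bool, and nested Finsets i₁ ⊆ i₂ of Fin n such that f (overwrite of a by v on i₁) = π and f (overwrite of a by v on i₂) ≠ π. (This corresponds to the existence of a chain of nested counterfactual antecedents at a whose consequent prediction flips at least three times, and characterizes non-convexity of the region on which f disagrees with π.) -/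
open Finset

private def Dset {n : ℕ} (x y : Fin n → Bool) : Finset (Fin n) :=
  Finset.univ.filter (fun j => x j ≠ y j)

private lemma mem_Dset {n : ℕ} {x y : Fin n → Bool} {j : Fin n} :
    j ∈ Dset x y ↔ x j ≠ y j := by simp [Dset]

private lemma ham_eq {n : ℕ} (a b : Fin n → Bool) :
    hammingDist a b = #(Dset a b) := rfl

private lemma ham_add {n : ℕ} (a b c : Fin n → Bool)
    (h : ∀ j, c j = a j ∨ c j = b j) :
    hammingDist a c + hammingDist c b = hammingDist a b := by
  rw [ham_eq, ham_eq, ham_eq, ← Finset.card_union_of_disjoint]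
  · congr 1
    ext j
    simp only [Finset.mem_union, mem_Dset]
    rcases h j with hc | hc <;> rw [hc] <;> tauto
  · rw [Finset.disjoint_left]
    intro j hj1 hj2
    rw [mem_Dset] at hj1 hj2
    rcases h j with hc | hc
    · exact hj1 hc.symm
    · exact hj2 hc

/-- The region `R = {z | f z ≠ π}` fails to be metrically convex for the
Hamming distance iff there are a world `a` with `f a ≠ π`, values `v`, and nested index
sets `i₁ ⊆ i₂` such that the overwrite of `a` by `v` on `i₁` is predicted `π` while the
overwrite on `i₂` is not (a chain of nested counterfactual antecedents whose consequent
prediction flips at least three times). -/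
theorem nonconvexity_iff_nested_flip
    {n : ℕ} {Y : Type*} (f : (Fin n → Bool) → Y) (π : Y) :
    (∃ a b c : Fin n → Bool, f a ≠ π ∧ f b ≠ π ∧
        hammingDist a c + hammingDist c b = hammingDist a b ∧ f c = π) ↔
    (∃ (a v : Fin n → Bool) (i₁ i₂ : Finset (Fin n)), i₁ ⊆ i₂ ∧ f a ≠ π ∧
        f (fun j => if j ∈ i₁ then v j else a j) = π ∧
        f (fun j => if j ∈ i₂ then v j else a j) ≠ π) := by
  constructor
  · rintro ⟨a, b, c, ha, hb, hdist, hc⟩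
    -- pointwise betweenness
    have hbetween : ∀ j, c j = a j ∨ c j = b j := by
      intro j
      by_contra hcon
      push_neg at hcon
      obtain ⟨h1, h2⟩ := hcon
      have hsub : Dset a b ⊆ Dset a c ∪ Dset c b := by
        intro x hx
        rw [mem_Dset] at hx
        simp only [Finset.mem_union, mem_Dset]
        by_contra hcon2
        push_neg at hcon2
        exact hx (hcon2.1.trans hcon2.2)
      have hj : j ∈ Dset a c ∩ Dset c b := by
        simp only [Finset.mem_inter, mem_Dset]
        exact ⟨fun h => h1 h.symm, h2⟩
      have hlt : #(Dset a b) < #(Dset a c) + #(Dset c b) := by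
        calc #(Dset a b) ≤ #(Dset a c ∪ Dset c b) := Finset.card_le_card hsub
          _ < #(Dset a c ∪ Dset c b) + #(Dset a c ∩ Dset c b) := by
              have : 0 < #(Dset a c ∩ Dset c b) := Finset.card_pos.mpr ⟨j, hj⟩
              omega
          _ = _ := Finset.card_union_add_card_inter _ _
      rw [ham_eq, ham_eq, ham_eq] at hdist
      omega
    refine ⟨a, b, Dset a c, Dset a b, ?_, ha, ?_, ?_⟩
    · intro x hx
      rw [mem_Dset] at hx ⊢
      rcases hbetween x with h | h
      · exact absurd h.symm hx
      · rw [← h]; exact hx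
    · have heq : (fun j => if j ∈ Dset a c then b j else a j) = c := by
        funext j
        by_cases hj : j ∈ Dset a c
        · rw [if_pos hj]
          rw [mem_Dset] at hj
          rcases hbetween j with h | h
          · exact absurd h.symm hj
          · exact h.symm
        · rw [if_neg hj]
          rw [mem_Dset] at hj
          push_neg at hj
          exact hj
      rw [heq]; exact hc
    · have heq : (fun j => if j ∈ Dset a b then b j else a j) = b := by
        funext j
        by_cases hj : j ∈ Dset a b
        · rw [if_pos hj]
        · rw [if_neg hj]
          rw [mem_Dset] at hj
          push_neg at hj
          exact hj
      rw [heq]; exact hb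
  · rintro ⟨a, v, i₁, i₂, hsub, ha, h1, h2⟩
    refine ⟨a, fun j => if j ∈ i₂ then v j else a j, fun j => if j ∈ i₁ then v j else a j,
      ha, h2, ?_, h1⟩
    apply ham_add
    intro j
    by_cases hj : j ∈ i₁
    · right; simp [hj, hsub hj]
    · left; simp [hj]
end
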